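/- For the fitness dynamic ḟ = −H L f with H symmetric positive definite and L symmetric positive semidefinite with second smallest eigenvalue λ₂(L) > 0 and L 1_n = 0 (constant L), every solution converges to a constant multiple of 1_n: the component of f orthogonal to the kernel of H L decays, and f(t) → α 1_n for some α. -/

import Mathlib

/-!
With `u = 1ᵀ H⁻¹` we have `uᵀ H L = 1ᵀ L = 0`, so `u ⬝ᵥ f` is conserved along the flow and
`f` can only converge to `c • 1` with `c = (u ⬝ᵥ f 0) / (u ⬝ᵥ 1)`. The deviation `g = f - c • 1`
solves the same equation and stays in the hyperplane `u ⬝ᵥ g = 0`, on which `gᵀ L g` vanishes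
only at `0` because `ker L = span 1` and `u ⬝ᵥ 1 > 0`. By compactness of the unit sphere,
`gᵀ L g ≥ ε gᵀ H⁻¹ g` there, so the Lyapunov function `gᵀ H⁻¹ g`, whose derivative is
`-2 gᵀ L g`, decays exponentially.
-/

open Matrix Filter Topology Real

theorem exists_pos_mul_le_of_homogeneous {E : Type*} [NormedAddCommGroup E] [NormedSpace ℝ E]
    [ProperSpace E] {q₁ q₂ : E → ℝ} (hq₁ : Continuous q₁) (hq₂ : Continuous q₂)
    (hq₁_smul : ∀ (c : ℝ) x, q₁ (c • x) = c ^ 2 * q₁ x)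
    (hq₂_smul : ∀ (c : ℝ) x, q₂ (c • x) = c ^ 2 * q₂ x)
    {C : Set E} (hC : IsClosed C) (hC_smul : ∀ (c : ℝ), ∀ x ∈ C, c • x ∈ C)
    (hq₁_pos : ∀ x ∈ C, x ≠ 0 → 0 < q₁ x) :
    ∃ ε > 0, ∀ x ∈ C, ε * q₂ x ≤ q₁ x := by
  set K := C ∩ Metric.sphere (0 : E) 1
  have hxK : ∀ x ∈ C, x ≠ 0 → ‖x‖⁻¹ • x ∈ K := fun x hx hx0 =>
    ⟨hC_smul _ x hx, by simp [norm_smul, norm_ne_zero_iff.2 hx0]⟩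
  -- both sides scale by `‖x‖ ^ 2`, so it suffices to compare them on `K`
  suffices ∃ ε > 0, ∀ y ∈ K, ε * q₂ y ≤ q₁ y by
    obtain ⟨ε, hε, hK⟩ := this
    refine ⟨ε, hε, fun x hx => ?_⟩
    obtain rfl | hx0 := eq_or_ne x 0
    · have h₁ : q₁ 0 = 0 := by simpa using hq₁_smul 0 0
      have h₂ : q₂ 0 = 0 := by simpa using hq₂_smul 0 0
      simp [h₁, h₂]
    rw [← smul_inv_smul₀ (norm_ne_zero_iff.2 hx0) x, hq₁_smul, hq₂_smul, mul_left_comm]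
    exact mul_le_mul_of_nonneg_left (hK _ (hxK x hx hx0)) (sq_nonneg _)
  obtain hempty | hne := K.eq_empty_or_nonempty
  · exact ⟨1, one_pos, by simp [hempty]⟩
  have hKc : IsCompact K := (isCompact_sphere 0 1).inter_left hC
  obtain ⟨x₁, hx₁, hmin⟩ := hKc.exists_isMinOn hne hq₁.continuousOn
  obtain ⟨x₂, -, hmax⟩ := hKc.exists_isMaxOn hne hq₂.continuousOn
  have hm : 0 < q₁ x₁ := hq₁_pos x₁ hx₁.1 (Metric.ne_of_mem_sphere hx₁.2 one_ne_zero)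
  refine ⟨q₁ x₁ / max (q₂ x₂) 1, by positivity, fun y hy => ?_⟩
  calc q₁ x₁ / max (q₂ x₂) 1 * q₂ y ≤ q₁ x₁ / max (q₂ x₂) 1 * max (q₂ x₂) 1 := by
        gcongr; exact (hmax hy).trans (le_max_left _ _)
    _ = q₁ x₁ := div_mul_cancel₀ _ (by positivity)
    _ ≤ q₁ y := hmin hy

section Derivatives

variable {𝕜 : Type*} [NontriviallyNormedField 𝕜] {ι κ : Type*} [Fintype ι]
  {f g : 𝕜 → ι → 𝕜} {f' g' : ι → 𝕜} {t : 𝕜}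

theorem HasDerivAt.dotProduct (hf : HasDerivAt f f' t) (hg : HasDerivAt g g' t) :
    HasDerivAt (fun s => f s ⬝ᵥ g s) (f' ⬝ᵥ g t + f t ⬝ᵥ g') t := by
  show HasDerivAt (fun s => ∑ i, f s i * g s i) (∑ i, f' i * g t i + ∑ i, f t i * g' i) t
  rw [← Finset.sum_add_distrib]
  exact HasDerivAt.fun_sum fun i _ => (hasDerivAt_pi.1 hf i).mul (hasDerivAt_pi.1 hg i)

theorem HasDerivAt.matrix_mulVec (A : Matrix κ ι 𝕜) (hf : HasDerivAt f f' t) :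
    HasDerivAt (fun s => A *ᵥ f s) (A *ᵥ f') t :=
  hasDerivAt_pi.2 fun i => by
    simpa [mulVec] using (hasDerivAt_const t (A i)).dotProduct hf

end Derivatives

theorem dotProduct_eq_of_hasDerivAt {ι : Type*} [Fintype ι] {f f' : ℝ → ι → ℝ} {u : ι → ℝ}
    (hf : ∀ t, HasDerivAt f (f' t) t) (hu : ∀ t, u ⬝ᵥ f' t = 0) (t : ℝ) :
    u ⬝ᵥ f t = u ⬝ᵥ f 0 := by
  have hd : ∀ t, HasDerivAt (fun s => u ⬝ᵥ f s) 0 t := fun t => by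
    simpa [hu t] using (hasDerivAt_const t u).dotProduct (hf t)
  exact is_const_of_deriv_eq_zero (fun s => (hd s).differentiableAt) (fun s => (hd s).deriv) t 0

theorem tendsto_zero_of_hasDerivAt_le_neg_mul {V V' : ℝ → ℝ} {k : ℝ} (hk : 0 < k)
    (hV : ∀ t, HasDerivAt V (V' t) t) (hV' : ∀ t, V' t ≤ -k * V t) (hV0 : ∀ t, 0 ≤ V t) :
    Tendsto V atTop (𝓝 0) := by
  -- `V t * exp (t * k)` is antitone, which gives `V t ≤ V 0 * exp (-(t * k))`
  have hW : Antitone fun t => V t * exp (t * k) := by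
    refine antitone_of_hasDerivAt_nonpos (fun t => (hV t).mul (hasDerivAt_mul_const k).exp)
      fun t => ?_
    change _ ≤ 0
    nlinarith [mul_le_mul_of_nonneg_right (hV' t) (exp_pos (t * k)).le]
  have hbound : ∀ t ≥ 0, V t ≤ V 0 * exp (-(t * k)) := fun t ht => by
    rw [Real.exp_neg, ← div_eq_mul_inv, le_div_iff₀ (exp_pos _)]
    simpa using hW ht
  refine squeeze_zero' (.of_forall hV0) (eventually_ge_atTop 0 |>.mono hbound) ?_
  simpa using
    (tendsto_exp_neg_atTop_nhds_zero.comp (tendsto_id.atTop_mul_const hk)).const_mul (V 0)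

namespace Matrix

variable {ι : Type*} [Fintype ι]

theorem smul_dotProduct_mulVec_smul (A : Matrix ι ι ℝ) (c : ℝ) (x : ι → ℝ) :
    c • x ⬝ᵥ A *ᵥ (c • x) = c ^ 2 * (x ⬝ᵥ A *ᵥ x) := by
  simp only [mulVec_smul, smul_dotProduct, dotProduct_smul, smul_eq_mul]
  ring

theorem PosDef.exists_pos_mul_norm_sq_le {B : Matrix ι ι ℝ} (hB : B.PosDef) :
    ∃ μ > 0, ∀ x, μ * ‖x‖ ^ 2 ≤ x ⬝ᵥ B *ᵥ x := by
  obtain ⟨μ, hμ, h⟩ := exists_pos_mul_le_of_homogeneous (q₁ := fun x => x ⬝ᵥ B *ᵥ x)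
    (q₂ := fun x => ‖x‖ ^ 2)
    (by fun_prop) (continuous_norm.pow 2) B.smul_dotProduct_mulVec_smul
    (fun c x => by rw [norm_smul, mul_pow, norm_eq_abs, sq_abs])
    isClosed_univ (fun _ _ _ => Set.mem_univ _)
    (fun x _ hx => by simpa using hB.dotProduct_mulVec_pos hx)
  exact ⟨μ, hμ, fun x => h x (Set.mem_univ x)⟩

theorem PosDef.tendsto_zero_of_dotProduct_mulVec_self {α : Type*} {l : Filter α}
    {B : Matrix ι ι ℝ} (hB : B.PosDef) {g : α → ι → ℝ}
    (hg : Tendsto (fun a => g a ⬝ᵥ B *ᵥ g a) l (𝓝 0)) : Tendsto g l (𝓝 0) := by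
  obtain ⟨μ, hμ, hle⟩ := hB.exists_pos_mul_norm_sq_le
  have hsq : Tendsto (fun a => ‖g a‖ ^ 2) l (𝓝 0) := by
    refine squeeze_zero (fun a => sq_nonneg _) (fun a => ?_) (by simpa using hg.const_mul μ⁻¹)
    rw [le_inv_mul_iff₀ hμ]
    exact hle (g a)
  simpa [sqrt_sq (norm_nonneg _), tendsto_zero_iff_norm_tendsto_zero] using hsq.sqrt

theorem PosSemidef.exists_pos_mul_le_of_dotProduct_eq_zero (B : Matrix ι ι ℝ)
    {L : Matrix ι ι ℝ} (hL : L.PosSemidef) {u : ι → ℝ}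
    (hker : ∀ x, u ⬝ᵥ x = 0 → L *ᵥ x = 0 → x = 0) :
    ∃ ε > 0, ∀ x, u ⬝ᵥ x = 0 → ε * (x ⬝ᵥ B *ᵥ x) ≤ x ⬝ᵥ L *ᵥ x := by
  refine exists_pos_mul_le_of_homogeneous (C := {x | u ⬝ᵥ x = 0}) (by fun_prop) (by fun_prop)
    L.smul_dotProduct_mulVec_smul B.smul_dotProduct_mulVec_smul
    (isClosed_eq (by fun_prop) continuous_const)
    (fun c x (hx : u ⬝ᵥ x = 0) => by simp [dotProduct_smul, hx]) fun x hx hx0 => ?_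
  refine (hL.dotProduct_mulVec_nonneg x).lt_of_ne' fun h => hx0 (hker x hx ?_)
  exact (hL.dotProduct_mulVec_zero_iff x).1 (by simpa using h)

theorem PosDef.tendsto_zero_of_hasDerivAt_neg_mul_mulVec [DecidableEq ι]
    {H L : Matrix ι ι ℝ} (hH : H.PosDef) {g : ℝ → ι → ℝ}
    (hg : ∀ t, HasDerivAt g (-((H * L) *ᵥ g t)) t) {ε : ℝ} (hε : 0 < ε)
    (hgap : ∀ t, ε * (g t ⬝ᵥ H⁻¹ *ᵥ g t) ≤ g t ⬝ᵥ L *ᵥ g t) : Tendsto g atTop (𝓝 0) := by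
  have hHinv : H⁻¹.PosDef := hH.inv
  have hsymm : ∀ a b, a ⬝ᵥ H⁻¹ *ᵥ b = H⁻¹ *ᵥ a ⬝ᵥ b := fun a b => by
    rw [dotProduct_mulVec, ← mulVec_transpose,
      show H⁻¹ᵀ = H⁻¹ by simpa using hHinv.isHermitian.eq]
  have hHL : ∀ x, H⁻¹ *ᵥ ((H * L) *ᵥ x) = L *ᵥ x := fun x => by
    rw [mulVec_mulVec, nonsing_inv_mul_cancel_left _ _ hH.det_pos.ne'.isUnit]
  -- `gᵀ H⁻¹ g` is a Lyapunov function, with derivative `-2 gᵀ L g ≤ -2 ε gᵀ H⁻¹ g`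
  have hV : ∀ t, HasDerivAt (fun s => g s ⬝ᵥ H⁻¹ *ᵥ g s) (-2 * (g t ⬝ᵥ L *ᵥ g t)) t := fun t => by
    refine ((hg t).dotProduct ((hg t).matrix_mulVec H⁻¹)).congr_deriv ?_
    rw [hsymm (-_), mulVec_neg, hHL, neg_dotProduct, dotProduct_neg, dotProduct_comm (L *ᵥ _)]
    ring
  refine hHinv.tendsto_zero_of_dotProduct_mulVec_self <|
    tendsto_zero_of_hasDerivAt_le_neg_mul (mul_pos two_pos hε) hV (fun t => ?_)
      fun t => by simpa using hHinv.posSemidef.dotProduct_mulVec_nonneg (g t)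
  linarith [hgap t]

end Matrix

/-- for the linear fitness dynamic `ḟ = −H L f` with `H`
symmetric positive definite, `L` symmetric PSD with `L 1_n = 0` and
`λ₂(L) > 0` (so that `ker L = span{1_n}`), every solution converges to a
constant multiple of the all-ones vector: `f(t) → α 1_n` as `t → ∞`. -/
theorem fitness_dynamic_converges_to_agreement
    {n : ℕ} (H L : Matrix (Fin n) (Fin n) ℝ)
    (hH : H.PosDef) (hL : L.PosSemidef)
    (hL1 : L.mulVec (fun _ => (1 : ℝ)) = 0)
    (hker : ∀ x : Fin n → ℝ, L.mulVec x = 0 → ∃ α : ℝ, x = fun _ => α)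
    (f : ℝ → Fin n → ℝ)
    (hf : ∀ i t, HasDerivAt (fun s => f s i)
      (-((H * L).mulVec (f t) i)) t) :
    ∃ α : ℝ, Filter.Tendsto f Filter.atTop (nhds (fun _ => α)) := by
  obtain rfl | hn := n.eq_zero_or_pos
  · exact ⟨0, tendsto_const_nhds.congr fun t => Subsingleton.elim _ _⟩
  have hf' : ∀ t, HasDerivAt f (-((H * L) *ᵥ f t)) t := fun t => hasDerivAt_pi.2 (hf · t)
  set one : Fin n → ℝ := fun _ => 1
  have hone : one ≠ 0 := fun h => one_ne_zero (congrFun h ⟨0, hn⟩)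
  have hconst : ∀ a : ℝ, a • one = fun _ => a := fun a => funext fun _ => mul_one a
  -- `u = 1ᵀ H⁻¹` is a left null vector of `H L`, so `u ⬝ᵥ f` is conserved
  set u := one ᵥ* H⁻¹
  have hu : u ᵥ* (H * L) = 0 := by
    rw [vecMul_vecMul, nonsing_inv_mul_cancel_left _ _ hH.det_pos.ne'.isUnit, ← mulVec_transpose,
      show Lᵀ = L by simpa using hL.isHermitian.eq, hL1]
  have hu1 : 0 < u ⬝ᵥ one := by
    simpa [u, ← dotProduct_mulVec] using hH.inv.dotProduct_mulVec_pos hone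
  set c := u ⬝ᵥ f 0 / u ⬝ᵥ one
  set g := fun t => f t - c • one
  have hg : ∀ t, HasDerivAt g (-((H * L) *ᵥ g t)) t := fun t => by
    simpa [g, mulVec_sub, mulVec_smul, ← mulVec_mulVec, hL1] using (hf' t).sub_const (c • one)
  have hug : ∀ t, u ⬝ᵥ g t = 0 := fun t => by
    rw [dotProduct_sub, dotProduct_eq_of_hasDerivAt hf'
      (fun t => by simp [dotProduct_mulVec, hu]) t, dotProduct_smul, smul_eq_mul,
      div_mul_cancel₀ _ hu1.ne', sub_self]
  have hker' : ∀ x, u ⬝ᵥ x = 0 → L *ᵥ x = 0 → x = 0 := fun x hux hLx => by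
    obtain ⟨α, rfl⟩ := hker x hLx
    rw [← hconst, dotProduct_smul, smul_eq_mul] at hux
    rw [← hconst, (mul_eq_zero.1 hux).resolve_right hu1.ne', zero_smul]
  obtain ⟨ε, hε, hgap⟩ := hL.exists_pos_mul_le_of_dotProduct_eq_zero H⁻¹ hker'
  have hg0 := hH.tendsto_zero_of_hasDerivAt_neg_mul_mulVec hg hε fun t => hgap _ (hug t)
  exact ⟨c, by simpa [g, hconst] using hg0.add_const (c • one)⟩
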